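/- For t ∈ (0,1), the function F(x) = 1/x + (t/2)·(x^{t−1} − 1)/(x^t − 1) is not nonincreasing on [1,∞); in fact F(x) ∼ −t/(2x^t) → 0⁻ as x → ∞ while F(x) < 0 for all large x, so F is eventually increasing. -/

import Mathlib

open Filter

noncomputable def Ffun (t x : ℝ) : ℝ :=
  1 / x + (t / 2) * ((x ^ (t - 1) - 1) / (x ^ t - 1))

open Real Set Topology

/-!
With `u = x ^ t` one has `F x = (1 + t/2) / x - (t/2) (1 - 1/x) / (u - 1)`, hence
`x ^ t * F x → -t/2`: `F` is eventually negative while tending to `0`, which no function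
antitone on `[1, ∞)` can do. Moreover
`x² (u - 1)² F' x = (t²/2)(x - 1) u - (t/2)(u - 1) - (1 + t/2)(u - 1)²`,
whose first term dominates because `u = x ^ t = o(x)` for `t < 1`; so `F` is eventually increasing.
-/

theorem AntitoneOn.le_of_tendsto_atTop {α β : Type*} [TopologicalSpace α] [Preorder α]
    [OrderClosedTopology α] [Preorder β] [IsDirectedOrder β] {f : β → α} {a : α} {s : β}
    (hf : AntitoneOn f (Ici s)) (ha : Tendsto f atTop (𝓝 a)) {b : β} (hb : s ≤ b) :
    a ≤ f b :=
  have : Nonempty β := ⟨b⟩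
  le_of_tendsto ha ((eventually_ge_atTop b).mono fun _ hc => hf hb (hb.trans hc) hc)

theorem exists_monotoneOn_Ici_of_eventually_hasDerivAt_nonneg {f f' : ℝ → ℝ}
    (h : ∀ᶠ x in atTop, HasDerivAt f (f' x) x ∧ 0 ≤ f' x) (a : ℝ) :
    ∃ M, a ≤ M ∧ MonotoneOn f (Ici M) := by
  obtain ⟨M, hM⟩ := eventually_atTop.1 h
  have hD : ∀ x ∈ Ici (max M a), HasDerivAt f (f' x) x ∧ 0 ≤ f' x :=
    fun x hx => hM x (le_of_max_le_left hx)
  refine ⟨max M a, le_max_right M a, monotoneOn_of_hasDerivWithinAt_nonneg (convex_Ici _)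
    (fun x hx => (hD x hx).1.continuousAt.continuousWithinAt)
    (fun x hx => (hD x (interior_subset hx)).1.hasDerivWithinAt)
    (fun x hx => (hD x (interior_subset hx)).2)⟩

theorem tendsto_rpow_atTop_zero_of_neg {s : ℝ} (hs : s < 0) :
    Tendsto (fun x : ℝ => x ^ s) atTop (𝓝 0) := by
  simpa using tendsto_rpow_neg_atTop (neg_pos.2 hs)

namespace Ffun

variable {t x : ℝ}

theorem eq_of_pos (hx : 0 < x) (hxt : x ^ t ≠ 1) :
    Ffun t x = (1 + t / 2) * x⁻¹ - t / 2 * ((1 - x⁻¹) / (x ^ t - 1)) := by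
  have hu : x ^ t - 1 ≠ 0 := sub_ne_zero.2 hxt
  rw [Ffun, rpow_sub_one hx.ne']
  field_simp
  ring

/-- `x ^ 2 * (x ^ t - 1) ^ 2` times the derivative of `Ffun t` at `x`. -/
noncomputable def derivNumerator (t x : ℝ) : ℝ :=
  t ^ 2 / 2 * (x - 1) * x ^ t - t / 2 * (x ^ t - 1) - (1 + t / 2) * (x ^ t - 1) ^ 2

theorem hasDerivAt (ht : 0 < t) (hx : 1 < x) :
    HasDerivAt (Ffun t) (derivNumerator t x / (x ^ 2 * (x ^ t - 1) ^ 2)) x := by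
  have hx0 : 0 < x := one_pos.trans hx
  have hu : x ^ t - 1 ≠ 0 := sub_ne_zero.2 (one_lt_rpow hx ht).ne'
  have hinv := hasDerivAt_inv hx0.ne'
  have hpow := (hasDerivAt_rpow_const (p := t) (Or.inl hx0.ne')).sub_const 1
  have hG := (hinv.const_mul (1 + t / 2)).sub
    (((hinv.const_sub 1).div hpow hu).const_mul (t / 2))
  have hF :
      (fun y => (1 + t / 2) * y⁻¹ - t / 2 * ((1 - y⁻¹) / (y ^ t - 1))) =ᶠ[𝓝 x] Ffun t := by
    filter_upwards [Ioi_mem_nhds hx] with y hy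
    exact (eq_of_pos (one_pos.trans hy) (one_lt_rpow hy ht).ne').symm
  refine (hG.congr_of_eventuallyEq hF.symm).congr_deriv ?_
  rw [derivNumerator, rpow_sub_one hx0.ne']
  field_simp
  ring

theorem derivNumerator_pos (ht : 0 < t) (hx : 1 < x)
    (h : t + (2 + t) * x ^ t ≤ t ^ 2 * (x - 1)) : 0 < derivNumerator t x := by
  have hu : 1 < x ^ t := one_lt_rpow hx ht
  unfold derivNumerator
  -- replace `u - 1` by `u` in the two negative terms
  nlinarith [mul_le_mul_of_nonneg_left h (by positivity : 0 ≤ x ^ t / 2)]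

theorem eventually_derivNumerator_pos (ht : 0 < t) (ht1 : t < 1) :
    ∀ᶠ x in atTop, 0 < derivNumerator t x := by
  have hsmall : ∀ᶠ x : ℝ in atTop, x ^ (t - 1) < t ^ 2 / (2 * (2 + t)) :=
    (tendsto_rpow_atTop_zero_of_neg (by linarith)).eventually_lt_const (by positivity)
  filter_upwards [hsmall, eventually_ge_atTop (2 * (1 + t) / t), eventually_gt_atTop 1]
    with x hs hl hx
  refine derivNumerator_pos ht hx ?_
  have hx0 : 0 < x := one_pos.trans hx
  have hpow : (2 + t) * x ^ t ≤ t ^ 2 / 2 * x := by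
    rw [lt_div_iff₀ (by positivity), rpow_sub_one hx0.ne', div_mul_eq_mul_div,
      div_lt_iff₀ hx0] at hs
    linarith
  have hlin : t + t ^ 2 ≤ t ^ 2 / 2 * x := by
    rw [div_le_iff₀ ht] at hl
    nlinarith
  linarith

theorem tendsto_rpow_mul_atTop (ht : 0 < t) (ht1 : t < 1) :
    Tendsto (fun x => x ^ t * Ffun t x) atTop (𝓝 (-(t / 2))) := by
  have hid : ∀ᶠ x : ℝ in atTop,
      (1 + t / 2) * x ^ (t - 1) - t / 2 * ((1 - x⁻¹) / (1 - (x ^ t)⁻¹)) = x ^ t * Ffun t x := by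
    filter_upwards [eventually_gt_atTop 1] with x hx
    have hx0 : 0 < x := one_pos.trans hx
    have hu : 1 < x ^ t := one_lt_rpow hx ht
    have hu' : 1 - (x ^ t)⁻¹ ≠ 0 := sub_ne_zero.2 (inv_lt_one_of_one_lt₀ hu).ne'
    rw [eq_of_pos hx0 hu.ne', rpow_sub_one hx0.ne']
    field_simp
  have hinv : Tendsto (fun x : ℝ => (x ^ t)⁻¹) atTop (𝓝 0) :=
    (tendsto_rpow_atTop ht).inv_tendsto_atTop
  have hlim := ((tendsto_rpow_atTop_zero_of_neg (sub_neg.2 ht1)).const_mul (1 + t / 2)).sub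
    (((tendsto_inv_atTop_zero.const_sub 1).div (hinv.const_sub 1) (by norm_num)).const_mul
      (t / 2))
  refine Tendsto.congr' hid ?_
  simpa using hlim

theorem tendsto_atTop_zero (ht : 0 < t) (ht1 : t < 1) : Tendsto (Ffun t) atTop (𝓝 0) := by
  have hid : ∀ᶠ x : ℝ in atTop, (x ^ t)⁻¹ * (x ^ t * Ffun t x) = Ffun t x := by
    filter_upwards [eventually_gt_atTop 0] with x hx
    rw [inv_mul_cancel_left₀ (rpow_pos_of_pos hx t).ne']
  simpa using ((tendsto_rpow_atTop ht).inv_tendsto_atTop.mul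
    (tendsto_rpow_mul_atTop ht ht1)).congr' hid

end Ffun

theorem Ffun_not_antitone (t : ℝ) (ht : t ∈ Set.Ioo (0:ℝ) 1) :
    Tendsto (fun x : ℝ => x ^ t * Ffun t x) atTop (nhds (-(t / 2))) ∧
    (∀ᶠ x in atTop, Ffun t x < 0) ∧
    (∃ M : ℝ, 1 ≤ M ∧ MonotoneOn (Ffun t) (Set.Ici M)) ∧
    ¬ AntitoneOn (Ffun t) (Set.Ici 1) := by
  obtain ⟨ht0, ht1⟩ := ht
  have hlim := Ffun.tendsto_rpow_mul_atTop ht0 ht1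
  have hneg : ∀ᶠ x in atTop, Ffun t x < 0 := by
    filter_upwards [hlim.eventually_lt_const (neg_lt_zero.2 (half_pos ht0)),
      eventually_gt_atTop 0] with x hx hx0
    exact neg_of_mul_neg_right hx (rpow_pos_of_pos hx0 t).le
  refine ⟨hlim, hneg, ?_, fun hanti => ?_⟩
  · refine exists_monotoneOn_Ici_of_eventually_hasDerivAt_nonneg
      (f' := fun x => Ffun.derivNumerator t x / (x ^ 2 * (x ^ t - 1) ^ 2)) ?_ 1
    filter_upwards [Ffun.eventually_derivNumerator_pos ht0 ht1, eventually_gt_atTop 1]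
      with x hpos hx
    exact ⟨Ffun.hasDerivAt ht0 hx, div_nonneg hpos.le (by positivity)⟩
  · obtain ⟨x, hx, hx1⟩ := (hneg.and (eventually_ge_atTop 1)).exists
    exact hx.not_ge (hanti.le_of_tendsto_atTop (Ffun.tendsto_atTop_zero ht0 ht1) hx1)
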